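/- Let (A,C,ψ) be an entwining structure. If g: C ⊗ A^{⊗(n+1)} → k satisfies the cyclicity condition g(c ⊗ a₁ ⊗ ... ⊗ a_{n+1}) = (-1)^n g(c^ψ ⊗ a₂ ⊗ ... ⊗ a_{n+1} ⊗ a_{1ψ}), then g satisfies the invariance condition g(c ⊗ a₁ ⊗ ... ⊗ a_{n+1}) = g(c^{ψ^{n+1}} ⊗ a_{1ψ} ⊗ ... ⊗ a_{n+1ψ}). In other words, C_λ^n(A,C,ψ) ⊆ I^n(A,C,ψ). -/

import Mathlib

open TensorProduct

/-- An entwining structure `(A, C, ψ)` over a field `k`: a unital `k`-algebra `A`,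
a counital `k`-coalgebra `C` and a `k`-linear map `ψ : C ⊗ A → A ⊗ C` satisfying the
entwining axioms of Brzeziński–Majid. -/
structure Entwining (k A C : Type) [Field k] [Ring A] [Algebra k A]
    [AddCommGroup C] [Module k C] [Coalgebra k C] : Type where
  ψ : C ⊗[k] A →ₗ[k] A ⊗[k] C
  mul_compat : ψ ∘ₗ TensorProduct.map (LinearMap.id : C →ₗ[k] C) (LinearMap.mul' k A) =
    TensorProduct.map (LinearMap.mul' k A) (LinearMap.id : C →ₗ[k] C)
      ∘ₗ (TensorProduct.assoc k A A C).symm.toLinearMap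
      ∘ₗ TensorProduct.map (LinearMap.id : A →ₗ[k] A) ψ
      ∘ₗ (TensorProduct.assoc k A C A).toLinearMap
      ∘ₗ TensorProduct.map ψ (LinearMap.id : A →ₗ[k] A)
      ∘ₗ (TensorProduct.assoc k C A A).symm.toLinearMap
  comul_compat : TensorProduct.map (LinearMap.id : A →ₗ[k] A)
        (CoalgebraStruct.comul (R := k) (A := C)) ∘ₗ ψ =
    (TensorProduct.assoc k A C C).toLinearMap
      ∘ₗ TensorProduct.map ψ (LinearMap.id : C →ₗ[k] C)
      ∘ₗ (TensorProduct.assoc k C A C).symm.toLinearMap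
      ∘ₗ TensorProduct.map (LinearMap.id : C →ₗ[k] C) ψ
      ∘ₗ (TensorProduct.assoc k C C A).toLinearMap
      ∘ₗ TensorProduct.map (CoalgebraStruct.comul (R := k) (A := C)) (LinearMap.id : A →ₗ[k] A)
  counit_compat : (TensorProduct.rid k A).toLinearMap
      ∘ₗ TensorProduct.map (LinearMap.id : A →ₗ[k] A)
        (CoalgebraStruct.counit (R := k) (A := C)) ∘ₗ ψ =
    (TensorProduct.lid k A).toLinearMap
      ∘ₗ TensorProduct.map (CoalgebraStruct.counit (R := k) (A := C)) (LinearMap.id : A →ₗ[k] A)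
  unit_compat : ∀ c : C, ψ (c ⊗ₜ[k] (1 : A)) = (1 : A) ⊗ₜ[k] c

variable {k A C : Type}

/-- `IterRep e m c v ι γ β` says that `Σ_{s : ι} (β s) ⊗ (γ s)` is a representation of
the `m`-fold iterated entwining `c^{ψ^m} ⊗ v_{1ψ} ⊗ ⋯ ⊗ v_{mψ}`, obtained by applying
`ψ` successively: first to `(c, v 0)`, then to the resulting coalgebra elements and
`v 1`, and so on. -/
inductive IterRep [Field k] [Ring A] [Algebra k A] [AddCommGroup C] [Module k C]
    [Coalgebra k C] (e : Entwining k A C) :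
    (m : ℕ) → C → (Fin m → A) → (ι : Type) → (ι → C) → (ι → (Fin m → A)) → Prop
  | zero (c : C) :
      IterRep e 0 c Fin.elim0 PUnit (fun _ => c) (fun _ => Fin.elim0)
  | succ {m : ℕ} (c : C) (v : Fin (m + 1) → A) (ι₀ : Type) [Fintype ι₀]
      (α : ι₀ → A) (γ₀ : ι₀ → C)
      (h : e.ψ (c ⊗ₜ[k] v 0) = ∑ i, α i ⊗ₜ[k] γ₀ i)
      (κ : ι₀ → Type) (γ : (i : ι₀) → κ i → C) (β : (i : ι₀) → κ i → (Fin m → A))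
      (hs : ∀ i : ι₀, IterRep e m (γ₀ i) (fun j => v j.succ) (κ i) (γ i) (β i)) :
      IterRep e (m + 1) c v ((i : ι₀) × κ i) (fun p => γ p.1 p.2)
        (fun p => Fin.cons (α p.1) (β p.1 p.2))

/-- `g ∈ ℐ^{m-1}(A,C,ψ)`: the functional `g : C ⊗ A^{⊗m} → k` is invariant, i.e.
`g(c ⊗ a₁ ⊗ ⋯ ⊗ a_m) = g(c^{ψ^m} ⊗ a_{1ψ} ⊗ ⋯ ⊗ a_{mψ})`, stated via arbitrary
representations of the iterated entwining. -/
def EntwInvariant [Field k] [Ring A] [Algebra k A] [AddCommGroup C] [Module k C]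
    [Coalgebra k C] (e : Entwining k A C) {m : ℕ}
    (g : C →ₗ[k] MultilinearMap k (fun _ : Fin m => A) k) : Prop :=
  ∀ (c : C) (v : Fin m → A) (ι : Type) [Fintype ι] (γ : ι → C) (β : ι → (Fin m → A)),
    IterRep e m c v ι γ β → g c v = ∑ s, g (γ s) (β s)

/-- `g ∈ 𝒞ⁿ_λ(A,C,ψ)`: the functional `g : C ⊗ A^{⊗(n+1)} → k` satisfies the cyclicity
condition `g(c ⊗ a₁ ⊗ … ⊗ a_{n+1}) = (-1)ⁿ g(c^ψ ⊗ a₂ ⊗ … ⊗ a_{n+1} ⊗ a_{1ψ})`,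
stated via arbitrary representations `ψ(c ⊗ a₁) = Σᵢ αᵢ ⊗ γᵢ`. -/
def EntwIsCyclic [Field k] [Ring A] [Algebra k A] [AddCommGroup C] [Module k C]
    [Coalgebra k C] (e : Entwining k A C) (n : ℕ)
    (g : C →ₗ[k] MultilinearMap k (fun _ : Fin (n + 1) => A) k) : Prop :=
  ∀ (c : C) (v : Fin (n + 1) → A) (t : ℕ) (α : Fin t → A) (γ : Fin t → C),
    e.ψ (c ⊗ₜ[k] v 0) = ∑ i, α i ⊗ₜ[k] γ i →
    g c v = (-1 : k) ^ n *
      ∑ i, g (γ i) (Function.update (fun j : Fin (n + 1) => v (j + 1)) (Fin.last n) (α i))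

/-! Applying the cyclicity condition once moves the first argument `a` of `g (c ⊗ a ⊗ x)` to
the end while entwining `c` past it, at the cost of a sign `(-1)ⁿ`. Starting from
`g (c ⊗ w ⊗ u)` with `w` of length `m`, `m` such steps along an iterated entwining of `c` past
`w` give `((-1)ⁿ)ᵐ Σ g (c^{ψ^m} ⊗ u ⊗ w_ψ)`. For `m = n + 1` the tail `u` is empty, so the
arguments are exactly the iterated entwining, and the sign is `(-1)^{n(n+1)} = 1`. -/

theorem Fin.update_last_cons_comp_add_one {α : Type*} {n : ℕ} (a : α) (x : Fin n → α) (b : α) :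
    Function.update (fun j => (Fin.cons a x : Fin (n + 1) → α) (j + 1)) (Fin.last n) b =
      Fin.snoc x b := by
  ext j
  induction j using Fin.lastCases with
  | last => simp
  | cast i => simp [Fin.coeSucc_eq_succ, (Fin.castSucc_lt_last i).ne]

namespace EntwIsCyclic

variable [Field k] [Ring A] [Algebra k A] [AddCommGroup C] [Module k C] [Coalgebra k C]
  {e : Entwining k A C} {n : ℕ} {g : C →ₗ[k] MultilinearMap k (fun _ : Fin (n + 1) => A) k}

theorem apply_cons (hg : EntwIsCyclic e n g) (c : C) (a : A) (x : Fin n → A)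
    {ι : Type} [Fintype ι] (α : ι → A) (γ : ι → C) (h : e.ψ (c ⊗ₜ[k] a) = ∑ i, α i ⊗ₜ[k] γ i) :
    g c (Fin.cons a x) = (-1 : k) ^ n * ∑ i, g (γ i) (Fin.snoc x (α i)) := by
  let σ := (Fintype.equivFin ι).symm
  have hσ : e.ψ (c ⊗ₜ[k] (Fin.cons a x : Fin (n + 1) → A) 0) = ∑ j, α (σ j) ⊗ₜ[k] γ (σ j) := by
    rw [Fin.cons_zero, h, σ.sum_comp (fun i => α i ⊗ₜ[k] γ i)]
  rw [hg c _ _ _ _ hσ, σ.sum_comp (fun i => g (γ i) (Function.update _ (Fin.last n) (α i)))]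
  simp only [Fin.update_last_cons_comp_add_one]

theorem apply_append_of_iterRep (hg : EntwIsCyclic e n g) {m : ℕ} {c : C} {w : Fin m → A}
    {ι : Type} {γ : ι → C} {β : ι → Fin m → A} (h : IterRep e m c w ι γ β) [Fintype ι]
    {r : ℕ} (u : Fin r → A) (hmr : m + r = n + 1) :
    g c (Fin.append w u ∘ Fin.cast hmr.symm) =
      ((-1 : k) ^ n) ^ m * ∑ s, g (γ s) (Fin.append u (β s) ∘ Fin.cast (by omega)) := by
  revert ‹Fintype ι›
  induction h generalizing r with
  | zero c =>
    intro _
    simp [Function.comp_def]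
  | @succ m c w ι₀ _ α γ₀ hψ κ γ β hs ih =>
    intro hfin
    obtain rfl : n = m + r := by omega
    have hκ (i : ι₀) : Fintype (κ i) :=
      have : Finite (κ i) := Finite.of_injective (Sigma.mk i) sigma_mk_injective
      Fintype.ofFinite _
    have hw :
        Fin.append w u ∘ Fin.cast hmr.symm = Fin.cons (w 0) (Fin.append (Fin.tail w) u) := by
      conv_lhs => rw [← Fin.cons_self_tail w, Fin.append_cons]
      funext j
      simp
    have hbranch (i : ι₀) : g (γ₀ i) (Fin.snoc (Fin.append (Fin.tail w) u) (α i)) =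
        ((-1 : k) ^ (m + r)) ^ m *
          ∑ s, g (γ i s) (Fin.append u (Fin.cons (α i) (β i s)) ∘ Fin.cast (by omega)) := by
      rw [← Fin.append_snoc]
      refine (ih i (Fin.snoc u (α i)) (by omega)).trans ?_
      simp [Fin.append_left_snoc, Function.comp_def]
    rw [hw, hg.apply_cons c (w 0) _ α γ₀ hψ, Finset.sum_congr rfl fun i _ => hbranch i,
      ← Finset.mul_sum, ← mul_assoc, ← pow_succ']
    congr 1
    rw [Subsingleton.elim hfin Sigma.instFintype, Fintype.sum_sigma]

end EntwIsCyclic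

/-- Every cyclic cochain is invariant: `𝒞ⁿ_λ(A,C,ψ) ⊆ ℐⁿ(A,C,ψ)`. -/
theorem cyclic_subset_invariant
    [Field k] [Ring A] [Algebra k A] [AddCommGroup C] [Module k C] [Coalgebra k C]
    (e : Entwining k A C) (n : ℕ)
    (g : C →ₗ[k] MultilinearMap k (fun _ : Fin (n + 1) => A) k)
    (hg : EntwIsCyclic e n g) :
    EntwInvariant e g := by
  intro c v ι _ γ β h
  have hsign : ((-1 : k) ^ n) ^ (n + 1) = 1 := by
    rw [← pow_mul, Even.neg_one_pow (Nat.even_mul_succ_self n)]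
  simpa [hsign, Function.comp_def] using hg.apply_append_of_iterRep h Fin.elim0 rfl
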